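/- arXiv:1401.6676 — 8 statements merged into one kernel-verified Lean document; each statement's English description precedes it below -/
import Mathlib

section
/- If (d; m_1, ..., m_r) is a homaloidal type (i.e., integers satisfying the Noether equalities ∑ m_i = 3(d-1) and ∑ m_i² = d² - 1) with d ≥ 2 and m_1 ≥ m_2 ≥ ... ≥ m_r ≥ 0, then m_1 + m_2 + m_3 ≥ d + 1. -/
/-!
Write `c = m 2`. Every multiplicity satisfies `m_i ≤ d - 1`, since `m_i² ≤ ∑ m_j² = d² - 1`.
Hence `m_i² ≤ c m_i` when `m_i ≤ c` (all `i ≥ 2`) and `m_i² ≤ c m_i + (d - 1)(m_i - c)`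
otherwise. Summing with the Noether equalities gives
`(d - 1)(d + 1) ≤ 3c(d - 1) + (d - 1)(m_0 + m_1 - 2c)`, and dividing by `d - 1 > 0` leaves
`d + 1 ≤ m_0 + m_1 + m_2`.
-/

open Finset

theorem sq_le_mul_add_mul_posPart {α : Type*} [CommRing α] [LinearOrder α] [IsStrictOrderedRing α]
    {x c D : α} (hx : 0 ≤ x) (hxD : x ≤ D) : x ^ 2 ≤ c * x + D * (x - c)⁺ := by
  rcases le_total x c with hxc | hcx
  · rw [posPart_eq_zero.2 (sub_nonpos.2 hxc)]
    nlinarith [mul_le_mul_of_nonneg_left hxc hx]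
  · rw [posPart_eq_self.2 (sub_nonneg.2 hcx)]
    nlinarith [mul_le_mul_of_nonneg_right hxD (sub_nonneg.2 hcx)]

theorem Antitone.sum_range_posPart_sub_le {α : Type*} [AddCommGroup α] [LinearOrder α]
    [IsOrderedAddMonoid α] {m : ℕ → α} (hm : Antitone m) (r k : ℕ) :
    ∑ i ∈ range r, (m i - m k)⁺ ≤ ∑ i ∈ range k, (m i - m k) := by
  have hvanish : ∀ i ∈ range r, (m i - m k)⁺ ≠ 0 → i < k := fun i _ hi => by
    by_contra hki
    exact hi (posPart_eq_zero.2 (sub_nonpos.2 (hm (not_lt.1 hki))))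
  calc ∑ i ∈ range r, (m i - m k)⁺ = ∑ i ∈ range r with i < k, (m i - m k)⁺ :=
        (sum_filter_of_ne hvanish).symm
    _ ≤ ∑ i ∈ range k, (m i - m k)⁺ :=
        sum_le_sum_of_subset_of_nonneg (fun i hi => mem_range.2 (mem_filter.1 hi).2)
          fun i _ _ => posPart_nonneg _
    _ = ∑ i ∈ range k, (m i - m k) :=
        sum_congr rfl fun i hi => posPart_eq_self.2 (sub_nonneg.2 (hm (mem_range.1 hi).le))

theorem noether_inequality_general (r : ℕ) (d : ℤ) (m : ℕ → ℤ)
    (hd : 2 ≤ d)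
    (hmono : ∀ i j : ℕ, i ≤ j → m j ≤ m i)
    (hnonneg : ∀ i, 0 ≤ m i)
    (h1 : ∑ i ∈ Finset.range r, m i = 3 * (d - 1))
    (h2 : ∑ i ∈ Finset.range r, (m i) ^ 2 = d ^ 2 - 1) :
    d + 1 ≤ m 0 + m 1 + m 2 := by
  have hle : ∀ i ∈ range r, m i ≤ d - 1 := fun i hi =>
    Int.le_sub_one_of_lt <| lt_of_pow_lt_pow_left₀ 2 (by omega) <| by
      linarith [h2 ▸ single_le_sum (fun j _ => sq_nonneg (m j)) hi]
  have key : d ^ 2 - 1 ≤ m 2 * (3 * (d - 1)) + (d - 1) * (m 0 + m 1 - 2 * m 2) := calc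
    d ^ 2 - 1 = ∑ i ∈ range r, m i ^ 2 := h2.symm
    _ ≤ ∑ i ∈ range r, (m 2 * m i + (d - 1) * (m i - m 2)⁺) :=
        sum_le_sum fun i hi => sq_le_mul_add_mul_posPart (hnonneg i) (hle i hi)
    _ = m 2 * ∑ i ∈ range r, m i + (d - 1) * ∑ i ∈ range r, (m i - m 2)⁺ := by
        rw [sum_add_distrib, mul_sum, mul_sum]
    _ ≤ _ := by
        rw [h1]
        gcongr
        · linarith
        · simpa [sum_range_succ] using Antitone.sum_range_posPart_sub_le hmono r 2
  exact le_of_mul_le_mul_left (a := d - 1) (by linarith) (by linarith)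

/-- Noether's inequality: if `(d; m_1, ..., m_r)` is a homaloidal type with `d ≥ 2`
and `m_1 ≥ m_2 ≥ ... ≥ m_r ≥ 0`, then `m_1 + m_2 + m_3 ≥ d + 1`.
The multiplicities are indexed from `0`, padded by `0` beyond `r`. -/
theorem noether_inequality (r : ℕ) (d : ℤ) (m : ℕ → ℤ)
    (hd : 2 ≤ d)
    (hmono : ∀ i j : ℕ, i ≤ j → m j ≤ m i)
    (hnonneg : ∀ i, 0 ≤ m i)
    (hzero : ∀ i, r ≤ i → m i = 0)
    (h1 : ∑ i ∈ Finset.range r, m i = 3 * (d - 1))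
    (h2 : ∑ i ∈ Finset.range r, (m i) ^ 2 = d ^ 2 - 1) :
    d + 1 ≤ m 0 + m 1 + m 2 :=
  noether_inequality_general r d m hd hmono hnonneg h1 h2
end

section
/- If (d; m_1, ..., m_r) satisfies the Noether equalities and ε = m_1 + m_2 + m_3 - d, then the tuple (d - ε; m_1 - ε, m_2 - ε, m_3 - ε, m_4, ..., m_r) also satisfies the Noether equalities. -/
/-! Lowering `m₁, m₂, m₃` by `ε` lowers `∑ mᵢ` by `3ε` and `∑ mᵢ²` by
`2ε(m₁ + m₂ + m₃) - 3ε² = 2ε(d + ε) - 3ε²`, which is exactly how `3(d - 1)` and `d² - 1`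
change when `d` is lowered by `ε`. -/

open Finset

theorem Finset.sum_range_ite_lt {M : Type*} [AddCommGroup M] {k r : ℕ} (hk : k ≤ r)
    (f g : ℕ → M) :
    ∑ i ∈ range r, (if i < k then f i else g i) =
      ∑ i ∈ range r, g i + ∑ i ∈ range k, (f i - g i) := by
  have head : ∑ i ∈ range k, (if i < k then f i else g i) = ∑ i ∈ range k, f i :=
    sum_congr rfl fun i hi => if_pos (mem_range.1 hi)
  have tail : ∑ i ∈ Ico k r, (if i < k then f i else g i) = ∑ i ∈ Ico k r, g i :=
    sum_congr rfl fun i hi => if_neg (mem_Ico.1 hi).1.not_gt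
  rw [← sum_range_add_sum_Ico _ hk, ← sum_range_add_sum_Ico g hk, head, tail, sum_sub_distrib]
  abel

/-- One step of Hudson's test preserves the Noether equalities:
if `(d; m_1, ..., m_r)` satisfies them and `ε = m_1 + m_2 + m_3 - d`, then
`(d - ε; m_1 - ε, m_2 - ε, m_3 - ε, m_4, ..., m_r)` satisfies them as well. -/
theorem hudson_step_preserves_noether (r : ℕ) (hr : 3 ≤ r) (d : ℤ) (m : ℕ → ℤ)
    (h1 : ∑ i ∈ Finset.range r, m i = 3 * (d - 1))
    (h2 : ∑ i ∈ Finset.range r, (m i) ^ 2 = d ^ 2 - 1) :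
    ∀ ε n, ε = m 0 + m 1 + m 2 - d → n = (fun i => if i < 3 then m i - ε else m i) →
      (∑ i ∈ Finset.range r, n i = 3 * ((d - ε) - 1) ∧
       ∑ i ∈ Finset.range r, (n i) ^ 2 = (d - ε) ^ 2 - 1) := by
  rintro ε n hε rfl
  have hsum : ∑ i ∈ range r, (if i < 3 then m i - ε else m i) = ∑ i ∈ range r, m i - 3 * ε := by
    rw [sum_range_ite_lt hr]
    simp only [sum_range_succ, sum_range_zero]
    ring
  have hsq : ∑ i ∈ range r, (if i < 3 then m i - ε else m i) ^ 2 =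
      ∑ i ∈ range r, m i ^ 2 - 2 * ε * (m 0 + m 1 + m 2) + 3 * ε ^ 2 := by
    simp only [apply_ite (· ^ 2)]
    rw [sum_range_ite_lt hr]
    simp only [sum_range_succ, sum_range_zero]
    ring
  constructor
  · linear_combination hsum + h1
  · linear_combination hsq + h2 + 2 * ε * hε
end

section
/- Hudson's test terminates: starting from any homaloidal type (d; m_1,...,m_r) with d ≥ 1, repeated application of the step 'sort multiplicities in decreasing order and replace (d; m_1,...,m_r) by (d-ε; m_1-ε, m_2-ε, m_3-ε, m_4,...,m_r) where ε = m_1+m_2+m_3-d' either reaches a tuple with a negative entry or reaches (1; 0, ..., 0) after finitely many steps. -/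
/-!
Each step is a quadratic transformation, so it preserves the two Noether equalities
`∑ mᵢ = 3(d - 1)` and `∑ mᵢ² = d² - 1`. As long as all multiplicities are nonnegative and
`d ≥ 2`, Noether's inequality `m₁ + m₂ + m₃ ≥ d + 1` holds: bounding the tail by
`∑_{i ≥ 4} mᵢ² ≤ m₃ ∑_{i ≥ 4} mᵢ` and the head by `m₁, m₂ ≤ d - 1` gives
`(d - 1)(m₁ + m₂ - 2m₃) ≥ (d - 1)(d + 1 - 3m₃)`. Hence `ε ≥ 1` and the degree drops, while
nonnegative multiplicities force `d ≥ 1`, and `d = 1` forces all multiplicities to vanish.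
-/

/-- A homaloidal type is encoded as a pair `(d, s)` where `s` is the multiset of
multiplicities. One step of Hudson's test: sort the multiplicities decreasingly,
set `ε = m₁ + m₂ + m₃ - d` and replace `(d; m₁, ..., m_r)` by
`(d - ε; m₁ - ε, m₂ - ε, m₃ - ε, m₄, ..., m_r)`. -/
def hudsonStep (p : ℤ × Multiset ℤ) : ℤ × Multiset ℤ :=
  match Multiset.sort p.2 (· ≥ ·) with
  | a :: b :: c :: rest =>
      let ε := a + b + c - p.1
      (p.1 - ε, ((a - ε) :: (b - ε) :: (c - ε) :: rest : List ℤ))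
  | l => (p.1, (l : List ℤ))

theorem List.sum_map_sq_le_mul_sum {R : Type*} [CommSemiring R] [PartialOrder R]
    [IsOrderedRing R] {c : R} {l : List R} (h : ∀ x ∈ l, 0 ≤ x ∧ x ≤ c) :
    (l.map (· ^ 2)).sum ≤ c * l.sum := by
  calc (l.map (· ^ 2)).sum ≤ (l.map (c * ·)).sum :=
        List.sum_le_sum fun x hx => by
          rw [sq]
          exact mul_le_mul_of_nonneg_right (h x hx).2 (h x hx).1
    _ = c * l.sum := by rw [List.sum_map_mul_left, List.map_id']

theorem noether_inequality_s3 {d a b c : ℤ} {rest : List ℤ} (hd : 2 ≤ d) (hab : b ≤ a)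
    (hbc : c ≤ b) (hrest : ∀ x ∈ rest, 0 ≤ x ∧ x ≤ c)
    (h1 : a + b + c + rest.sum = 3 * (d - 1))
    (h2 : a ^ 2 + b ^ 2 + c ^ 2 + (rest.map (· ^ 2)).sum = d ^ 2 - 1) :
    d + 1 ≤ a + b + c := by
  have htail := List.sum_map_sq_le_mul_sum hrest
  have htail_nonneg : 0 ≤ (rest.map (· ^ 2)).sum :=
    List.sum_nonneg fun x hx => by
      obtain ⟨y, -, rfl⟩ := List.mem_map.1 hx
      positivity
  have ha : a ≤ d - 1 := by
    by_contra! h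
    nlinarith [sq_nonneg b, sq_nonneg c]
  have hhead : a * (a - c) + b * (b - c) ≤ (d - 1) * (a + b - 2 * c) := by
    nlinarith [mul_nonneg (sub_nonneg.2 ha) (sub_nonneg.2 (hbc.trans hab)),
      mul_nonneg (sub_nonneg.2 (hab.trans ha)) (sub_nonneg.2 hbc)]
  have hscaled : (d - 1) * (d + 1 - 3 * c) ≤ (d - 1) * (a + b - 2 * c) := by
    nlinarith
  have := le_of_mul_le_mul_left hscaled (by omega)
  omega

def IsHomaloidal (p : ℤ × Multiset ℤ) : Prop :=
  p.2.sum = 3 * (p.1 - 1) ∧ (p.2.map (· ^ 2)).sum = p.1 ^ 2 - 1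

def HudsonStops (p : ℤ × Multiset ℤ) : Prop :=
  (∃ x ∈ p.2, x < 0) ∨ (p.1 = 1 ∧ ∀ x ∈ p.2, x = 0)

namespace IsHomaloidal

variable {p : ℤ × Multiset ℤ}

theorem hudsonStep (hp : IsHomaloidal p) : IsHomaloidal (hudsonStep p) := by
  obtain ⟨d, s⟩ := p
  have hs := Multiset.sort_eq s (· ≥ ·)
  unfold _root_.hudsonStep
  split
  next a b c rest hsort =>
    rw [hsort] at hs
    subst hs
    simp only [IsHomaloidal, Multiset.sum_coe, Multiset.map_coe, List.map_cons,
      List.sum_cons] at hp ⊢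
    constructor
    · linear_combination hp.1
    · linear_combination hp.2
  next =>
    dsimp only
    rwa [hs]

theorem three_le_card (hp : IsHomaloidal p) (hd : 2 ≤ p.1) : 3 ≤ Multiset.card p.2 := by
  obtain ⟨d, s⟩ := p
  obtain ⟨l, rfl⟩ := Quot.exists_rep s
  by_contra! hcard
  match l, hcard with
  | [], _ =>
    simp [IsHomaloidal] at hp hd
    omega
  | [a], _ =>
    simp [IsHomaloidal] at hp hd
    nlinarith
  | [a, b], _ =>
    simp [IsHomaloidal] at hp hd
    nlinarith [sq_nonneg (a - b)]

theorem one_le_fst (hp : IsHomaloidal p) (hnonneg : ∀ x ∈ p.2, 0 ≤ x) : 1 ≤ p.1 := by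
  have := Multiset.sum_nonneg hnonneg
  have := hp.1
  omega

theorem eq_zero_of_fst_eq_one (hp : IsHomaloidal p) (hd : p.1 = 1) : ∀ x ∈ p.2, x = 0 := by
  intro x hx
  have hsq : (p.2.map (· ^ 2)).sum = 0 := by rw [hp.2, hd]; norm_num
  have hle : x ^ 2 ≤ (p.2.map (· ^ 2)).sum :=
    Multiset.single_le_sum (fun y hy => by
      obtain ⟨z, -, rfl⟩ := Multiset.mem_map.1 hy
      positivity) _ (Multiset.mem_map_of_mem _ hx)
  nlinarith [sq_nonneg x]

theorem hudsonStep_fst_lt (hp : IsHomaloidal p) (hd : 2 ≤ p.1) (hnonneg : ∀ x ∈ p.2, 0 ≤ x) :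
    (_root_.hudsonStep p).1 < p.1 := by
  obtain ⟨d, s⟩ := p
  have hlen : 3 ≤ (s.sort (· ≥ ·)).length := by
    rw [Multiset.length_sort]
    exact hp.three_le_card hd
  have hs := Multiset.sort_eq s (· ≥ ·)
  have hsorted := Multiset.pairwise_sort s (· ≥ ·)
  rcases hsort : s.sort (· ≥ ·) with _ | ⟨a, _ | ⟨b, _ | ⟨c, rest⟩⟩⟩
  iterate 3 simp [hsort] at hlen
  rw [hsort] at hs hsorted
  have hstep : (_root_.hudsonStep (d, s)).1 = d - (a + b + c - d) := by
    unfold _root_.hudsonStep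
    simp only [hsort]
  subst hs
  simp only [List.pairwise_cons, List.mem_cons, forall_eq_or_imp] at hsorted
  simp only [IsHomaloidal, Multiset.sum_coe, Multiset.map_coe, List.map_cons,
    List.sum_cons] at hp
  have hrest : ∀ x ∈ rest, 0 ≤ x ∧ x ≤ c := fun x hx =>
    ⟨hnonneg x (by simp [hx]), hsorted.2.2.1 x hx⟩
  have := noether_inequality_s3 hd hsorted.1.1 hsorted.2.1.1 hrest
    (by linear_combination hp.1) (by linear_combination hp.2)
  omega

end IsHomaloidal

theorem exists_hudsonStops_iterate {p : ℤ × Multiset ℤ} (hp : IsHomaloidal p) :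
    ∃ n, HudsonStops (hudsonStep^[n] p) := by
  induction hk : p.1.toNat using Nat.strong_induction_on generalizing p with
  | _ k ih =>
    by_cases hneg : ∃ x ∈ p.2, x < 0
    · exact ⟨0, Or.inl hneg⟩
    push Not at hneg
    obtain hd | hd := (hp.one_le_fst hneg).eq_or_lt
    · exact ⟨0, Or.inr ⟨hd.symm, hp.eq_zero_of_fst_eq_one hd.symm⟩⟩
    have hlt := hp.hudsonStep_fst_lt hd hneg
    obtain ⟨n, hn⟩ := ih _ (by omega) hp.hudsonStep rfl
    exact ⟨n + 1, hn⟩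

theorem hudson_test_terminates_general (d : ℤ) (s : Multiset ℤ)
    (h1 : s.sum = 3 * (d - 1))
    (h2 : (s.map (fun x => x ^ 2)).sum = d ^ 2 - 1) :
    ∃ n : ℕ, (∃ x ∈ (hudsonStep^[n] (d, s)).2, x < 0) ∨
      ((hudsonStep^[n] (d, s)).1 = 1 ∧ ∀ x ∈ (hudsonStep^[n] (d, s)).2, x = 0) :=
  exists_hudsonStops_iterate ⟨h1, h2⟩

/-- Hudson's test terminates: starting from any homaloidal type `(d; m_1, ..., m_r)`
with `d ≥ 1` (satisfying the Noether equalities), after finitely many steps one either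
reaches a tuple with a negative entry or reaches `(1; 0, ..., 0)`. -/
theorem hudson_test_terminates (d : ℤ) (s : Multiset ℤ) (hd : 1 ≤ d)
    (h1 : s.sum = 3 * (d - 1))
    (h2 : (s.map (fun x => x ^ 2)).sum = d ^ 2 - 1) :
    ∃ n : ℕ, (∃ x ∈ (hudsonStep^[n] (d, s)).2, x < 0) ∨
      ((hudsonStep^[n] (d, s)).1 = 1 ∧ ∀ x ∈ (hudsonStep^[n] (d, s)).2, x = 0) :=
  hudson_test_terminates_general d s h1 h2
end

section
/- Let d ≥ 12 and let (d; m_1, ..., m_r) be integers satisfying the Noether equalities, with all m_i ≥ 0 and m_i ≤ d - 1 for all i, and suppose B(d; m) holds (Bézout: m_i + m_j ≤ d for all i ≠ j). If m_1 ≥ m_2 ≥ ... ≥ m_r, and m_1 + m_2 = d with m_2 = m_3 = d - m_1 and m_1 > d/2, then r > γ + 1 where γ is the number of indices i ≥ 2 with m_i = d - m_1; equivalently, if r = γ + 1 then m_1(d - 2m_1) = (d-1)(2d - 3m_1 - 1), which is impossible for m_1 < d - 1. -/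
/-!
If `m_2 = ⋯ = m_r = t := d - m_1`, the Noether equalities read `m_1 + k t = 3(d - 1)` and
`m_1² + k t² = d² - 1` with `k = r - 1`. Eliminating `k` gives the stated equation, which is
equivalent to `(2t - 1)(t - 1) = 0`, i.e. `m_1 = d - 1`.
-/

open Finset

theorem Finset.sum_range_succ_of_tail_eq {M : Type*} [AddCommMonoid M] (f : ℕ → M) (n : ℕ)
    (c : M) (hf : ∀ i, 1 ≤ i → i < n + 1 → f i = c) :
    ∑ i ∈ range (n + 1), f i = f 0 + n • c := by
  rw [sum_range_succ', add_comm, sum_congr rfl fun i hi ↦ hf (i + 1) (by omega)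
    (by simpa using mem_range.mp hi), sum_const, card_range]

theorem mul_sub_two_mul_ne_of_lt_sub_one {d a : ℤ} (ha : a < d - 1) :
    a * (d - 2 * a) ≠ (d - 1) * (2 * d - 3 * a - 1) := by
  have hfactor : (d - 1) * (2 * d - 3 * a - 1) - a * (d - 2 * a) =
      (2 * (d - a) - 1) * (d - a - 1) := by ring
  have hpos : 0 < (2 * (d - a) - 1) * (d - a - 1) := mul_pos (by omega) (by omega)
  omega

theorem extra_basepoint_general (d : ℤ) (r : ℕ) (hr : 3 ≤ r) (m : ℕ → ℤ)
    (h1 : ∑ i ∈ Finset.range r, m i = 3 * (d - 1))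
    (h2 : ∑ i ∈ Finset.range r, (m i) ^ 2 = d ^ 2 - 1) :
    ((∀ i, 1 ≤ i → i < r → m i = d - m 0) →
        m 0 * (d - 2 * m 0) = (d - 1) * (2 * d - 3 * m 0 - 1)) ∧
    (m 0 < d - 1 → ∃ i, 1 ≤ i ∧ i < r ∧ m i ≠ d - m 0) := by
  obtain ⟨k, rfl⟩ : ∃ k, r = k + 1 := ⟨r - 1, by omega⟩
  have key : (∀ i, 1 ≤ i → i < k + 1 → m i = d - m 0) →
      m 0 * (d - 2 * m 0) = (d - 1) * (2 * d - 3 * m 0 - 1) := by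
    intro htail
    rw [sum_range_succ_of_tail_eq m k _ htail, nsmul_eq_mul] at h1
    rw [sum_range_succ_of_tail_eq (m · ^ 2) k _ fun i hi hik ↦ by rw [htail i hi hik],
      nsmul_eq_mul] at h2
    linear_combination (d - m 0) * h1 - h2
  refine ⟨key, fun hlt ↦ ?_⟩
  by_contra! htail
  exact mul_sub_two_mul_ne_of_lt_sub_one hlt (key htail)

/-- Key step of Lemma `Lem:MultiplicitiesDminus1`: let `d ≥ 12` and let
`(d; m_1, ..., m_r)` (here indexed from `0`) satisfy the Noether equalities, with all
`m_i ≥ 0`, `m_i ≤ d - 1`, Bézout (`m_i + m_j ≤ d` for `i ≠ j`), sorted decreasingly,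
`m_1 + m_2 = d`, `m_3 = d - m_1` and `m_1 > d/2`. Then: if all multiplicities after
the first equal `d - m_1` (i.e. `r = γ + 1`), the equation
`m_1(d - 2m_1) = (d-1)(2d - 3m_1 - 1)` holds; and this being impossible for
`m_1 < d - 1`, there is a further base-point, i.e. some index `i ≥ 2` (1-based)
with `m_i ≠ d - m_1`. -/
theorem extra_basepoint (d : ℤ) (hd : 12 ≤ d) (r : ℕ) (hr : 3 ≤ r) (m : ℕ → ℤ)
    (h1 : ∑ i ∈ Finset.range r, m i = 3 * (d - 1))
    (h2 : ∑ i ∈ Finset.range r, (m i) ^ 2 = d ^ 2 - 1)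
    (hnonneg : ∀ i < r, 0 ≤ m i)
    (hle : ∀ i < r, m i ≤ d - 1)
    (hbezout : ∀ i < r, ∀ j < r, i ≠ j → m i + m j ≤ d)
    (hmono : ∀ i j : ℕ, i ≤ j → j < r → m j ≤ m i)
    (hsum : m 0 + m 1 = d)
    (hm2 : m 2 = d - m 0)
    (hbig : d < 2 * m 0) :
    ((∀ i, 1 ≤ i → i < r → m i = d - m 0) →
        m 0 * (d - 2 * m 0) = (d - 1) * (2 * d - 3 * m 0 - 1)) ∧
    (m 0 < d - 1 → ∃ i, 1 ≤ i ∧ i < r ∧ m i ≠ d - m 0) :=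
  extra_basepoint_general d r hr m h1 h2
end

section
/- There is no integer solution m_1 to the equation m_1(d - 2m_1) = (d-1)(2d - 3m_1 - 1) with d ≥ 2 and 0 ≤ m_1 < d - 1. -/
/-- There is no integer solution `m₁` of `m₁(d - 2m₁) = (d-1)(2d - 3m₁ - 1)`
with `d ≥ 2` and `0 ≤ m₁ < d - 1`. -/
theorem no_integer_solution (d m₁ : ℤ) (hd : 2 ≤ d) (h0 : 0 ≤ m₁) (h1 : m₁ < d - 1) :
    m₁ * (d - 2 * m₁) ≠ (d - 1) * (2 * d - 3 * m₁ - 1) := by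
  intro h
  nlinarith [mul_nonneg (by linarith : (0:ℤ) ≤ 2*(d - m₁) - 1) (by linarith : (0:ℤ) ≤ d - m₁ - 2)]
end

section
/- Let B be the 10×10 Bertini matrix of the paper and ν the permutation matrix exchanging e_1 and e_2. Then for each integer a ≥ 0, (νB)^{2a} equals I + M_a, where M_a is the 10×10 matrix with first row (36a², 12a²-6a, 12a²+6a, 12a², ..., 12a²), second row (-12a²-6a, -4a², -4a²-4a, -4a²-2a, ..., -4a²-2a), third row (-12a²+6a, -4a²+4a, -4a², -4a²+2a, ..., -4a²+2a), and rows 4 through 10 all equal to (-12a², -4a²+2a, -4a²-2a, -4a², ..., -4a²). -/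
/-- The Bertini matrix of the paper. -/
def BertiniB : Matrix (Fin 10) (Fin 10) ℤ :=
  Matrix.of fun i j =>
    if j = 0 then (if i = 0 then 17 else if i = 1 then 0 else -6)
    else if j = 1 then (if i = 1 then 1 else 0)
    else if i = 0 then 6
    else if i = 1 then 0
    else if i = j then -3
    else -2

/-- The permutation matrix `ν` exchanging `e₁` and `e₂`. -/
def nuMat : Matrix (Fin 10) (Fin 10) ℤ :=
  Matrix.of fun i j =>
    if (i = 1 ∧ j = 2) ∨ (i = 2 ∧ j = 1) then 1
    else if i = j ∧ i ≠ 1 ∧ i ≠ 2 then 1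
    else 0

/-- The matrix `M_a` of the paper: `(νB)^{2a} = I + M_a`. -/
def Mmat (a : ℤ) : Matrix (Fin 10) (Fin 10) ℤ :=
  Matrix.of fun i j =>
    if i = 0 then
      (if j = 0 then 36 * a ^ 2 else if j = 1 then 12 * a ^ 2 - 6 * a
       else if j = 2 then 12 * a ^ 2 + 6 * a else 12 * a ^ 2)
    else if i = 1 then
      (if j = 0 then -12 * a ^ 2 - 6 * a else if j = 1 then -4 * a ^ 2
       else if j = 2 then -4 * a ^ 2 - 4 * a else -4 * a ^ 2 - 2 * a)
    else if i = 2 then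
      (if j = 0 then -12 * a ^ 2 + 6 * a else if j = 1 then -4 * a ^ 2 + 4 * a
       else if j = 2 then -4 * a ^ 2 else -4 * a ^ 2 + 2 * a)
    else
      (if j = 0 then -12 * a ^ 2 else if j = 1 then -4 * a ^ 2 + 2 * a
       else if j = 2 then -4 * a ^ 2 - 2 * a else -4 * a ^ 2)


/-- Auxiliary: `(νB)^2` as an explicit constant matrix. -/
def Cmat : Matrix (Fin 10) (Fin 10) ℤ :=
  Matrix.of fun i j =>
    if j = 0 then (if i = 0 then 37 else if i = 1 then -18 else if i = 2 then -6 else -12)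
    else if j = 1 then (if i = 0 then 6 else if i = 1 then -3 else if i = 2 then 0 else -2)
    else if j = 2 then (if i = 0 then 18 else if i = 1 then -8 else if i = 2 then -3 else -6)
    else if i = 0 then 12
    else if i = 1 then -6
    else if i = 2 then -2
    else if i = j then -3
    else -4

lemma nuB_sq : (nuMat * BertiniB) * (nuMat * BertiniB) = Cmat := by decide

set_option maxHeartbeats 8000000 in
lemma step_lemma (a : ℤ) : (1 + Mmat a) * Cmat = 1 + Mmat (a + 1) := by
  ext i j
  fin_cases i <;> fin_cases j <;>
    simp (config := { decide := true }) [Mmat, Cmat, Matrix.mul_apply, Fin.sum_univ_succ,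
      Matrix.one_apply] <;> ring

/-- For each integer `a ≥ 0`, `(νB)^{2a} = I + M_a`. -/
theorem nuB_pow_two_a (a : ℕ) : (nuMat * BertiniB) ^ (2 * a) = 1 + Mmat (a : ℤ) := by
  induction a with
  | zero => simpa using (by decide : (1 : Matrix (Fin 10) (Fin 10) ℤ) + Mmat 0 = 1).symm
  | succ n ih =>
      have h2 : 2 * (n + 1) = 2 * n + 2 := by ring
      rw [h2, pow_add, ih, pow_two, nuB_sq, step_lemma]
      push_cast
      ring_nf
end

section
/- Suppose d = 36a² + 1 with a ≥ 1, and let n_1 = 12a²+6a, n_2 = ... = n_8 = 12a², n_9 = 12a²-6a. Suppose 1 ≤ k ≤ a and integers ε_1, ..., ε_r with 0 ≤ ε_i ≤ k for i = 1,...,9, ε_i ≥ 0 for i ≥ 10, satisfy ∑_{i=1}^r ε_i = 3k and (d+k)² - 1 = (d² - 1) + 24a² ∑_{i=1}^9 ε_i + 12a(ε_1 - ε_9) + ∑_{i=1}^r ε_i². Then ε_i = 0 for all i ≥ 10. -/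
/-!
Write `T = ∑_{i ≥ 10} ε_i`. Substituting `d = 36a² + 1` and `∑_{i ≤ 9} ε_i = 3k - T` turns the
quadratic identity into `2k + k² + 24a²T = 12a(ε_1 - ε_9) + ∑_{i ≤ 9} ε_i² + ∑_{i ≥ 10} ε_i²`.
The right side is at most `12ak + k(3k - T) + T²`, and `T ≤ 3k ≤ 3a`, so a tail `T ≥ 1` would make
`24a²T` exceed it. Hence `T = 0`, and the nonnegative `ε_i`, `i ≥ 10`, all vanish.
-/

open Finset

theorem Finset.sum_Icc_one_add_sum_Icc {M : Type*} [AddCommMonoid M] (f : ℕ → M) {m n : ℕ}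
    (hmn : m ≤ n) : ∑ i ∈ Icc 1 m, f i + ∑ i ∈ Icc (m + 1) n, f i = ∑ i ∈ Icc 1 n, f i := by
  simpa only [← Icc_add_one_left_eq_Ioc, zero_add] using
    sum_Ioc_consecutive f (Nat.zero_le m) hmn

theorem Finset.sum_sq_le_mul_sum_of_le {ι R : Type*} [Semiring R] [PartialOrder R]
    [IsOrderedRing R] {s : Finset ι} {f : ι → R} {c : R} (hf : ∀ i ∈ s, 0 ≤ f i ∧ f i ≤ c) :
    ∑ i ∈ s, f i ^ 2 ≤ c * ∑ i ∈ s, f i := by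
  rw [mul_sum]
  refine sum_le_sum fun i hi ↦ ?_
  rw [sq]
  exact mul_le_mul_of_nonneg_right (hf i hi).2 (hf i hi).1

theorem halphen_tail_eq_zero {a k T E Q₁ Q₂ : ℤ} (hk : 1 ≤ k) (hka : k ≤ a) (hT : 0 ≤ T)
    (hTk : T ≤ 3 * k) (hE : E ≤ k) (hQ₁ : Q₁ ≤ k * (3 * k - T)) (hQ₂ : Q₂ ≤ T ^ 2)
    (h : 2 * k + k ^ 2 + 24 * a ^ 2 * T = 12 * a * E + Q₁ + Q₂) : T = 0 := by
  by_contra hT0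
  have hT1 : 1 ≤ T := by omega
  have hT2 : T ^ 2 ≤ 3 * k * T := by nlinarith
  have haE : 12 * a * E ≤ 12 * a ^ 2 := by nlinarith
  nlinarith

theorem halphen_estimate_general (a k d : ℤ) (r : ℕ) (ε : ℕ → ℤ)
    (hk1 : 1 ≤ k) (hka : k ≤ a)
    (hd : d = 36 * a ^ 2 + 1)
    (hr : 9 ≤ r)
    (hsmall : ∀ i, 1 ≤ i → i ≤ 9 → 0 ≤ ε i ∧ ε i ≤ k)
    (hpos : ∀ i, 10 ≤ i → i ≤ r → 0 ≤ ε i)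
    (hsum : ∑ i ∈ Finset.Icc 1 r, ε i = 3 * k)
    (hq : (d + k) ^ 2 - 1 =
        (d ^ 2 - 1) + 24 * a ^ 2 * (∑ i ∈ Finset.Icc 1 9, ε i)
          + 12 * a * (ε 1 - ε 9) + ∑ i ∈ Finset.Icc 1 r, (ε i) ^ 2) :
    ∀ i, 10 ≤ i → i ≤ r → ε i = 0 := by
  have hhead : ∀ i ∈ Icc 1 9, 0 ≤ ε i ∧ ε i ≤ k := fun i hi ↦
    hsmall i (mem_Icc.1 hi).1 (mem_Icc.1 hi).2
  have htail : ∀ i ∈ Icc 10 r, 0 ≤ ε i := fun i hi ↦ hpos i (mem_Icc.1 hi).1 (mem_Icc.1 hi).2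
  set T := ∑ i ∈ Icc 10 r, ε i
  have hS : ∑ i ∈ Icc 1 9, ε i = 3 * k - T := by
    rw [← sum_Icc_one_add_sum_Icc _ hr] at hsum
    linarith
  have hTk : T ≤ 3 * k := by linarith [sum_nonneg fun i hi ↦ (hhead i hi).1]
  have hE : ε 1 - ε 9 ≤ k := by
    linarith [(hsmall 1 le_rfl (by norm_num)).2, (hsmall 9 (by norm_num) le_rfl).1]
  have hQ₁ : ∑ i ∈ Icc 1 9, ε i ^ 2 ≤ k * (3 * k - T) := hS ▸ sum_sq_le_mul_sum_of_le hhead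
  rw [← sum_Icc_one_add_sum_Icc _ hr, hS, hd] at hq
  have hT : T = 0 := halphen_tail_eq_zero hk1 hka (sum_nonneg htail) hTk hE hQ₁
    (sum_sq_le_sq_sum_of_nonneg htail) (by linear_combination hq)
  intro i hi hir
  exact (sum_eq_zero_iff_of_nonneg htail).1 hT i (mem_Icc.2 ⟨hi, hir⟩)

/-- Key arithmetic estimate of Proposition `Prop:Halphen`: let `d = 36a² + 1` with
`a ≥ 1`, `1 ≤ k ≤ a`, and suppose the integers `ε_1, ..., ε_r` (indexed `1, ..., r`
with `r ≥ 9`) satisfy `0 ≤ ε_i ≤ k` for `1 ≤ i ≤ 9`, `ε_i ≥ 0` for `i ≥ 10`,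
`∑ ε_i = 3k` and
`(d+k)² - 1 = (d² - 1) + 24a²·∑_{i≤9} ε_i + 12a(ε_1 - ε_9) + ∑ ε_i²`.
Then `ε_i = 0` for all `i ≥ 10`. -/
theorem halphen_estimate (a k d : ℤ) (r : ℕ) (ε : ℕ → ℤ)
    (ha : 1 ≤ a) (hk1 : 1 ≤ k) (hka : k ≤ a)
    (hd : d = 36 * a ^ 2 + 1)
    (hr : 9 ≤ r)
    (hsmall : ∀ i, 1 ≤ i → i ≤ 9 → 0 ≤ ε i ∧ ε i ≤ k)
    (hpos : ∀ i, 10 ≤ i → i ≤ r → 0 ≤ ε i)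
    (hsum : ∑ i ∈ Finset.Icc 1 r, ε i = 3 * k)
    (hq : (d + k) ^ 2 - 1 =
        (d ^ 2 - 1) + 24 * a ^ 2 * (∑ i ∈ Finset.Icc 1 9, ε i)
          + 12 * a * (ε 1 - ε 9) + ∑ i ∈ Finset.Icc 1 r, (ε i) ^ 2) :
    ∀ i, 10 ≤ i → i ≤ r → ε i = 0 :=
  halphen_estimate_general a k d r ε hk1 hka hd hr hsmall hpos hsum hq
end

section
/- Applying one Hudson step to the homaloidal type (3m; 3m-6, 6^{m-3}, 4³, 3², 2, 1) for m ≥ 5 (with multiplicities sorted decreasingly: 3m-6 ≥ 6 ≥ ... when m ≥ 4, so ε = (3m-6) + 6 + 6 - 3m = 6) yields a type whose sorted multiplicity sequence is that of (3(m-2); 3(m-2)-6, 6^{m-5}, 4³, 3², 2, 1); consequently, by induction from the base cases m = 3, 4, the type (3m; 3m-6, 6^{m-3}, 4³, 3², 2, 1) passes Hudson's test for every m ≥ 3. -/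
/-- A type passes Hudson's test if iterating the step keeps all multiplicities
nonnegative and eventually reaches `(1; 0, ..., 0)`. -/
def passesHudson (p : ℤ × Multiset ℤ) : Prop :=
  ∃ n : ℕ, (∀ j ≤ n, ∀ x ∈ (hudsonStep^[j] p).2, (0 : ℤ) ≤ x) ∧
    (hudsonStep^[n] p).1 = 1 ∧ ∀ x ∈ (hudsonStep^[n] p).2, x = 0

/-- The multiplicities of the homaloidal type `(3m; 3m-6, 6^{m-3}, 4³, 3², 2, 1)`. -/
def exType (m : ℕ) : Multiset ℤ :=
  (3 * (m : ℤ) - 6) ::ₘ (Multiset.replicate (m - 3) (6 : ℤ) + {4, 4, 4, 3, 3, 2, 1})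

/-!
For `m ≥ 5` the three largest multiplicities of `(3m; 3m-6, 6^{m-3}, 4³, 3², 2, 1)` are
`3m-6, 6, 6`, so `ε = 6` and the Hudson step turns them into `3m-12, 0, 0`: the result is the
type for `m - 2` with two extra zero multiplicities. As long as at least three multiplicities are
present and all are nonnegative, zeros sort below them and are carried along unchanged by every
Hudson step, so passing the test descends from `m - 2` to `m`. The cases `m = 3, 4` are finite
computations.
-/

open Multiset

theorem Multiset.exists_eq_cons_cons_cons_of_three_le_card {α : Type*} [LinearOrder α]
    {S : Multiset α} (hS : 3 ≤ card S) :
    ∃ a b c R, S = a ::ₘ b ::ₘ c ::ₘ R ∧ b ≤ a ∧ c ≤ b ∧ ∀ x ∈ R, x ≤ c := by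
  obtain ⟨a, b, c, rest, hsort⟩ : ∃ a b c rest, sort S (· ≥ ·) = a :: b :: c :: rest := by
    have hlen := length_sort (s := S) (· ≥ ·)
    match h : sort S (· ≥ ·), hlen with
    | a :: b :: c :: rest, _ => exact ⟨a, b, c, rest, rfl⟩
    | [], hlen | [_], hlen | [_, _], hlen =>
      simp only [List.length_nil, List.length_cons] at hlen
      omega
  have hpw := pairwise_sort S (· ≥ ·)
  rw [hsort] at hpw
  simp only [List.pairwise_cons, List.mem_cons, forall_eq_or_imp] at hpw
  refine ⟨a, b, c, rest, ?_, hpw.1.1, hpw.2.1.1, hpw.2.2.1⟩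
  rw [← sort_eq S (· ≥ ·), hsort]
  rfl

theorem hudsonStep_cons_cons_cons {d a b c : ℤ} {R : Multiset ℤ} (hab : b ≤ a) (hbc : c ≤ b)
    (hR : ∀ x ∈ R, x ≤ c) :
    hudsonStep (d, a ::ₘ b ::ₘ c ::ₘ R) =
      (d - (a + b + c - d),
        (a - (a + b + c - d)) ::ₘ (b - (a + b + c - d)) ::ₘ (c - (a + b + c - d)) ::ₘ R) := by
  have hsort : sort (a ::ₘ b ::ₘ c ::ₘ R) (· ≥ ·) = a :: b :: c :: sort R (· ≥ ·) := by
    have hc : ∀ x ∈ c ::ₘ R, x ≤ b := forall_mem_cons.2 ⟨hbc, fun x hx => (hR x hx).trans hbc⟩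
    have hb : ∀ x ∈ b ::ₘ c ::ₘ R, x ≤ a :=
      forall_mem_cons.2 ⟨hab, fun x hx => (hc x hx).trans hab⟩
    rw [sort_cons _ _ _ hb, sort_cons _ _ _ hc, sort_cons _ _ _ hR]
  simp only [hudsonStep, hsort, ← cons_coe, sort_eq]

theorem card_hudsonStep (p : ℤ × Multiset ℤ) : card (hudsonStep p).2 = card p.2 := by
  rw [hudsonStep, ← length_sort (s := p.2) (· ≥ ·)]
  split <;> simp_all

theorem card_iterate_hudsonStep (p : ℤ × Multiset ℤ) (n : ℕ) :
    card (hudsonStep^[n] p).2 = card p.2 := by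
  induction n with
  | zero => rfl
  | succ n ih => rw [Function.iterate_succ_apply', card_hudsonStep, ih]

theorem hudsonStep_add_of_forall_le {p : ℤ × Multiset ℤ} {T : Multiset ℤ} (hp : 3 ≤ card p.2)
    (hT : ∀ t ∈ T, ∀ s ∈ p.2, t ≤ s) :
    hudsonStep (p.1, p.2 + T) = ((hudsonStep p).1, (hudsonStep p).2 + T) := by
  obtain ⟨d, S⟩ := p
  obtain ⟨a, b, c, R, rfl, hab, hbc, hR⟩ := exists_eq_cons_cons_cons_of_three_le_card hp
  have hRT : ∀ x ∈ R + T, x ≤ c := by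
    simp only [mem_add]
    rintro x (hx | hx)
    exacts [hR x hx, hT x hx c (by simp)]
  simp only [cons_add]
  rw [hudsonStep_cons_cons_cons hab hbc hRT, hudsonStep_cons_cons_cons hab hbc hR]
  simp only [cons_add]

theorem iterate_hudsonStep_add_replicate_zero {p : ℤ × Multiset ℤ} (k n : ℕ)
    (hp : 3 ≤ card p.2) (hnonneg : ∀ j < n, ∀ x ∈ (hudsonStep^[j] p).2, 0 ≤ x) :
    hudsonStep^[n] (p.1, p.2 + replicate k 0) =
      ((hudsonStep^[n] p).1, (hudsonStep^[n] p).2 + replicate k 0) := by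
  induction n with
  | zero => rfl
  | succ n ih =>
    rw [Function.iterate_succ_apply', ih fun j hj => hnonneg j (by omega),
      Function.iterate_succ_apply']
    refine hudsonStep_add_of_forall_le (by rwa [card_iterate_hudsonStep]) fun t ht s hs => ?_
    rw [eq_of_mem_replicate ht]
    exact hnonneg n n.lt_succ_self s hs

theorem passesHudson_add_replicate_zero {p : ℤ × Multiset ℤ} (k : ℕ) (hp : 3 ≤ card p.2)
    (h : passesHudson p) : passesHudson (p.1, p.2 + replicate k 0) := by
  obtain ⟨n, hnonneg, hdeg, hzero⟩ := h
  have hiter (j : ℕ) (hj : j ≤ n) := iterate_hudsonStep_add_replicate_zero k j hp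
    fun i hi => hnonneg i (by omega)
  refine ⟨n, fun j hj x hx => ?_, by rw [hiter n le_rfl]; exact hdeg, fun x hx => ?_⟩
  · rw [hiter j hj, mem_add] at hx
    exact hx.elim (hnonneg j hj x) fun hx => (eq_of_mem_replicate hx).ge
  · rw [hiter n le_rfl, mem_add] at hx
    exact hx.elim (hzero x) eq_of_mem_replicate

theorem passesHudson_of_passesHudson_hudsonStep {p : ℤ × Multiset ℤ} (hp : ∀ x ∈ p.2, 0 ≤ x)
    (h : passesHudson (hudsonStep p)) : passesHudson p := by
  obtain ⟨n, hnonneg, hdeg, hzero⟩ := h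
  refine ⟨n + 1, fun j hj => ?_, hdeg, hzero⟩
  cases j with
  | zero => exact hp
  | succ j => exact hnonneg j (by omega)

/-- A copy of `hudsonStep` on lists, using insertion sort: unlike the well-founded merge sort
behind `Multiset.sort`, it reduces in the kernel, so concrete types can be tested by `decide`. -/
def hudsonStepList (p : ℤ × List ℤ) : ℤ × List ℤ :=
  match p.2.insertionSort (· ≥ ·) with
  | a :: b :: c :: rest =>
      let ε := a + b + c - p.1
      (p.1 - ε, (a - ε) :: (b - ε) :: (c - ε) :: rest)
  | l => (p.1, l)

theorem hudsonStep_map_coe (p : ℤ × List ℤ) :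
    hudsonStep (Prod.map id (↑) p) = Prod.map id (↑) (hudsonStepList p) := by
  simp only [hudsonStep, hudsonStepList, Prod.map_fst, Prod.map_snd, id, coe_sort,
    List.mergeSort_eq_insertionSort (· ≥ ·)]
  split <;> rfl

theorem passesHudson_coe_of_hudsonStepList {d : ℤ} {l : List ℤ} (n : ℕ)
    (h : (∀ j ≤ n, ∀ x ∈ (hudsonStepList^[j] (d, l)).2, 0 ≤ x) ∧
      (hudsonStepList^[n] (d, l)).1 = 1 ∧ ∀ x ∈ (hudsonStepList^[n] (d, l)).2, x = 0) :
    passesHudson (d, ↑l) := by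
  have hiter (j : ℕ) : hudsonStep^[j] (d, ↑l) = Prod.map id (↑) (hudsonStepList^[j] (d, l)) :=
    ((Function.Semiconj.iterate_right (fun p => (hudsonStep_map_coe p).symm) j) (d, l)).symm
  obtain ⟨hnonneg, hdeg, hzero⟩ := h
  refine ⟨n, fun j hj x hx => ?_, by simpa [hiter] using hdeg, fun x hx => ?_⟩
  · rw [hiter, Prod.map_snd, mem_coe] at hx
    exact hnonneg j hj x hx
  · rw [hiter, Prod.map_snd, mem_coe] at hx
    exact hzero x hx

theorem passesHudson_exType_three : passesHudson (3 * ((3 : ℕ) : ℤ), exType 3) :=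
  passesHudson_coe_of_hudsonStepList (l := [3, 4, 4, 4, 3, 3, 2, 1]) 4 (by decide)

theorem passesHudson_exType_four : passesHudson (3 * ((4 : ℕ) : ℤ), exType 4) :=
  passesHudson_coe_of_hudsonStepList (l := [6, 6, 4, 4, 4, 3, 3, 2, 1]) 5 (by decide)

theorem exType_nonneg {m : ℕ} (hm : 2 ≤ m) : ∀ x ∈ exType m, 0 ≤ x := by
  intro x hx
  simp only [exType, mem_cons, mem_add, mem_replicate, insert_eq_cons, mem_singleton] at hx
  omega

theorem three_le_card_exType (m : ℕ) : 3 ≤ card (exType m) := by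
  simp [exType]

theorem exType_eq_cons_cons_cons {m : ℕ} (hm : 5 ≤ m) :
    exType m = (3 * (m : ℤ) - 6) ::ₘ 6 ::ₘ 6 ::ₘ (replicate (m - 5) 6 + {4, 4, 4, 3, 3, 2, 1}) := by
  rw [exType, show m - 3 = m - 5 + 1 + 1 by omega, replicate_succ, replicate_succ, cons_add,
    cons_add]

theorem exType_sub_two {m : ℕ} (hm : 5 ≤ m) :
    exType (m - 2) = (3 * (m : ℤ) - 12) ::ₘ (replicate (m - 5) 6 + {4, 4, 4, 3, 3, 2, 1}) := by
  rw [exType, show m - 2 - 3 = m - 5 by omega, Nat.cast_sub (by omega : 2 ≤ m)]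
  ring_nf

theorem hudsonStep_exType {m : ℕ} (hm : 5 ≤ m) :
    hudsonStep (3 * (m : ℤ), exType m) =
      (3 * ((m : ℤ) - 2), exType (m - 2) + replicate 2 0) := by
  have hR : ∀ x ∈ replicate (m - 5) 6 + {4, 4, 4, 3, 3, 2, 1}, x ≤ (6 : ℤ) := by
    intro x hx
    simp only [mem_add, mem_replicate, insert_eq_cons, mem_cons, mem_singleton] at hx
    omega
  rw [exType_eq_cons_cons_cons hm, hudsonStep_cons_cons_cons (by omega) le_rfl hR,
    exType_sub_two hm]
  have hε : 3 * (m : ℤ) - 6 + 6 + 6 - 3 * m = 6 := by ring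
  simp only [hε, sub_self, Prod.mk.injEq]
  refine ⟨by ring, ?_⟩
  generalize (replicate (m - 5) 6 + {4, 4, 4, 3, 3, 2, 1} : Multiset ℤ) = R
  rw [show 3 * (m : ℤ) - 6 - 6 = 3 * m - 12 by ring, cons_add, add_comm R]
  simp only [replicate_succ, replicate_zero, cons_add, zero_add]

/-- For `m ≥ 5`, one Hudson step applied to `(3m; 3m-6, 6^{m-3}, 4³, 3², 2, 1)`
(sorted decreasingly, `ε = 6`) yields the multiplicities of
`(3(m-2); 3(m-2)-6, 6^{m-5}, 4³, 3², 2, 1)` (together with two zero entries);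
consequently, by induction from the base cases `m = 3, 4`, the type
`(3m; 3m-6, 6^{m-3}, 4³, 3², 2, 1)` passes Hudson's test for every `m ≥ 3`. -/
theorem exType_passes_hudson :
    (∀ m : ℕ, 5 ≤ m →
      hudsonStep (3 * (m : ℤ), exType m) =
        (3 * ((m : ℤ) - 2), exType (m - 2) + Multiset.replicate 2 0)) ∧
    (∀ m : ℕ, 3 ≤ m → passesHudson (3 * (m : ℤ), exType m)) := by
  refine ⟨fun m hm => hudsonStep_exType hm, fun m => ?_⟩
  induction m using Nat.strong_induction_on with
  | _ m ih =>
    intro hm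
    obtain rfl | rfl | hm5 : m = 3 ∨ m = 4 ∨ 5 ≤ m := by omega
    · exact passesHudson_exType_three
    · exact passesHudson_exType_four
    · apply passesHudson_of_passesHudson_hudsonStep (exType_nonneg (by omega))
      rw [hudsonStep_exType hm5]
      have := passesHudson_add_replicate_zero 2 (three_le_card_exType _)
        (ih (m - 2) (by omega) (by omega))
      rwa [Nat.cast_sub (by omega : 2 ≤ m), Nat.cast_ofNat] at this
end
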